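/- There exists an absolute constant c > 0 such that for every integer k ≥ 2 the following holds. Set λ = √(log k / 3). Let J be a random variable uniformly distributed on {1, …, k}, and conditionally on J = i let Z be distributed according to N(λ e_i, I_k), the Gaussian measure on ℝ^k with mean λ e_i and identity covariance. Then for every measurable function Ψ : ℝ^k → {1, …, k}, the expected squared mean-estimation error satisfies E[‖λ e_{Ψ(Z)} − λ e_J‖^2] ≥ c · log k. -/

import Mathlib

/-!
The squared error equals `2λ²` off the event `Ψ(Z) = J` and `0` on it, so it suffices to bound
the success probability `k⁻¹ ∑ᵢ N(λeᵢ, I)(Ψ⁻¹{i})`. Cauchy–Schwarz against the likelihood ratio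
`dN(m, I)/dN(0, I)`, whose second moment is `exp ‖m‖²`, gives
`N(m, I)(A) ≤ exp(‖m‖²/2) √(N(0, I)(A))`. As the fibres `Ψ⁻¹{i}` partition `ℝᵏ`, a second
Cauchy–Schwarz bounds the success probability by `exp(λ²/2)/√k = k^{-1/3} ≤ 4/5`, so the error
is at least `(2/5)λ² = (2/15) log k`.
-/

open MeasureTheory ProbabilityTheory
open scoped ENNReal

/-- The standard Gaussian measure on `ℝ^k` (product of standard one-dimensional Gaussians). -/
noncomputable def stdGaussianPi (k : ℕ) : Measure (Fin k → ℝ) :=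
  Measure.pi fun _ => gaussianReal 0 1

/-- `N(m, I_k)`: the Gaussian measure on `ℝ^k` with mean `m` and identity covariance,
i.e. the pushforward of the standard Gaussian under translation by `m`. -/
noncomputable def gaussianPi (k : ℕ) (m : Fin k → ℝ) : Measure (Fin k → ℝ) :=
  (stdGaussianPi k).map (fun z => z + m)

/-- The `i`-th standard basis vector of `ℝ^k`, scaled by `lam`. -/
noncomputable def scaledBasis (k : ℕ) (lam : ℝ) (i : Fin k) : Fin k → ℝ :=
  fun j => if j = i then lam else 0

/-- The joint law of `(J, Z)` where `J` is uniform on `{1,…,k}` and, given `J = i`,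
`Z ∼ N(λ e_i, I_k)`. -/
noncomputable def jointLaw (k : ℕ) (lam : ℝ) : Measure (Fin k × (Fin k → ℝ)) :=
  (k : ℝ≥0∞)⁻¹ • ∑ i : Fin k,
    (Measure.dirac i).prod (gaussianPi k (scaledBasis k lam i))

open Real

section PiWithDensity

variable {ι : Type*} [Fintype ι] {α : ι → Type*} [∀ i, MeasurableSpace (α i)]
  {μ : (i : ι) → Measure (α i)} [∀ i, IsProbabilityMeasure (μ i)]

theorem lintegral_fintype_prod_eq_prod {f : (i : ι) → α i → ℝ≥0∞} (hf : ∀ i, Measurable (f i)) :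
    ∫⁻ x, ∏ i, f i (x i) ∂Measure.pi μ = ∏ i, ∫⁻ y, f i y ∂μ i := by
  rw [lintegral_prod_eq_prod_lintegral_of_indepFun _ _
    (iIndepFun_pi fun i => (hf i).aemeasurable) fun i => (hf i).comp (measurable_pi_apply i)]
  exact Finset.prod_congr rfl fun i _ =>
    (measurePreserving_eval μ i).lintegral_comp (hf i)

theorem Measure.pi_withDensity {f : (i : ι) → α i → ℝ≥0∞} (hf : ∀ i, Measurable (f i))
    [∀ i, SigmaFinite ((μ i).withDensity (f i))] :
    Measure.pi (fun i => (μ i).withDensity (f i))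
      = (Measure.pi μ).withDensity fun x => ∏ i, f i (x i) := by
  refine Measure.pi_eq fun s hs => ?_
  have hind : (Set.univ.pi s).indicator (fun x => ∏ i, f i (x i))
      = fun x => ∏ i, (s i).indicator (f i) (x i) := by
    ext x
    by_cases hx : x ∈ Set.univ.pi s
    · simp [Set.indicator_of_mem hx, Set.indicator_of_mem (Set.mem_univ_pi.1 hx _)]
    · obtain ⟨i, hi⟩ : ∃ i, x i ∉ s i := by simpa [Set.mem_univ_pi] using hx
      rw [Set.indicator_of_notMem hx, eq_comm]
      exact Finset.prod_eq_zero (Finset.mem_univ i) (Set.indicator_of_notMem hi _)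
  rw [withDensity_apply _ (MeasurableSet.univ_pi hs),
    ← lintegral_indicator (MeasurableSet.univ_pi hs), hind,
    lintegral_fintype_prod_eq_prod fun i => (hf i).indicator (hs i)]
  exact Finset.prod_congr rfl fun i _ => by
    rw [withDensity_apply _ (hs i), lintegral_indicator (hs i)]

end PiWithDensity

theorem withDensity_apply_le_sqrt_mul_sqrt {α : Type*} [MeasurableSpace α] (ν : Measure α)
    {f : α → ℝ≥0∞} (hf : AEMeasurable f ν) {A : Set α} (hA : MeasurableSet A) :
    ν.withDensity f A ≤ (∫⁻ x, f x ^ 2 ∂ν) ^ (1 / 2 : ℝ) * ν A ^ (1 / 2 : ℝ) := by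
  have hind : Measurable (A.indicator (1 : α → ℝ≥0∞)) := measurable_one.indicator hA
  have hsq : ∀ x, A.indicator (1 : α → ℝ≥0∞) x ^ (2 : ℝ) = A.indicator 1 x := fun x => by
    by_cases hx : x ∈ A <;> simp [hx]
  calc ν.withDensity f A = ∫⁻ x, f x * A.indicator 1 x ∂ν := by
        rw [withDensity_apply _ hA, ← lintegral_indicator hA]
        congr 1 with x
        by_cases hx : x ∈ A <;> simp [hx]
    _ ≤ (∫⁻ x, f x ^ (2 : ℝ) ∂ν) ^ (1 / 2 : ℝ)
          * (∫⁻ x, A.indicator 1 x ^ (2 : ℝ) ∂ν) ^ (1 / 2 : ℝ) :=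
        ENNReal.lintegral_mul_le_Lp_mul_Lq ν Real.HolderConjugate.two_two hf hind.aemeasurable
    _ = _ := by simp_rw [hsq, ENNReal.rpow_two, lintegral_indicator_one hA]

noncomputable def gaussianLikelihoodRatio (c x : ℝ) : ℝ≥0∞ :=
  ENNReal.ofReal (exp (c * x - c ^ 2 / 2))

theorem measurable_gaussianLikelihoodRatio (c : ℝ) : Measurable (gaussianLikelihoodRatio c) := by
  unfold gaussianLikelihoodRatio
  fun_prop

theorem gaussianReal_eq_withDensity (c : ℝ) :
    gaussianReal c 1 = (gaussianReal 0 1).withDensity (gaussianLikelihoodRatio c) := by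
  rw [gaussianReal_of_var_ne_zero c one_ne_zero, gaussianReal_of_var_ne_zero 0 one_ne_zero,
    ← withDensity_mul _ (measurable_gaussianPDF _ _) (measurable_gaussianLikelihoodRatio c)]
  congr 1 with x
  rw [gaussianPDF_def, gaussianPDF_def, Pi.mul_apply, gaussianLikelihoodRatio,
    ← ENNReal.ofReal_mul (gaussianPDFReal_nonneg _ _ _)]
  simp only [gaussianPDFReal, NNReal.coe_one, mul_one, sub_zero, mul_assoc, ← exp_add]
  ring_nf

instance (c : ℝ) :
    IsProbabilityMeasure ((gaussianReal 0 1).withDensity (gaussianLikelihoodRatio c)) := by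
  rw [← gaussianReal_eq_withDensity]
  infer_instance

theorem lintegral_gaussianLikelihoodRatio (c : ℝ) :
    ∫⁻ x, gaussianLikelihoodRatio c x ∂gaussianReal 0 1 = 1 := by
  rw [← setLIntegral_univ, ← withDensity_apply _ MeasurableSet.univ, measure_univ]

theorem lintegral_gaussianLikelihoodRatio_sq (c : ℝ) :
    ∫⁻ x, gaussianLikelihoodRatio c x ^ 2 ∂gaussianReal 0 1 = ENNReal.ofReal (exp (c ^ 2)) := by
  have h : ∀ x, gaussianLikelihoodRatio c x ^ 2
      = ENNReal.ofReal (exp (c ^ 2)) * gaussianLikelihoodRatio (2 * c) x := fun x => by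
    rw [gaussianLikelihoodRatio, gaussianLikelihoodRatio, ← ENNReal.ofReal_pow (exp_pos _).le,
      ← ENNReal.ofReal_mul (exp_pos _).le, ← exp_nat_mul, ← exp_add]
    ring_nf
  simp_rw [h]
  rw [lintegral_const_mul _ (measurable_gaussianLikelihoodRatio _),
    lintegral_gaussianLikelihoodRatio, mul_one]

instance (k : ℕ) : IsProbabilityMeasure (stdGaussianPi k) := by
  unfold stdGaussianPi
  infer_instance

instance {k : ℕ} (m : Fin k → ℝ) : IsProbabilityMeasure (gaussianPi k m) :=
  Measure.isProbabilityMeasure_map (measurable_add_const m).aemeasurable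

theorem gaussianPi_eq_pi {k : ℕ} (m : Fin k → ℝ) :
    gaussianPi k m = Measure.pi fun j => gaussianReal (m j) 1 := by
  have h := Measure.pi_map_pi (μ := fun _ : Fin k => gaussianReal 0 1)
    (f := fun j x => x + m j) fun _ => (measurable_add_const _).aemeasurable
  simp only [gaussianReal_map_add_const, zero_add] at h
  exact h

theorem gaussianPi_eq_withDensity {k : ℕ} (m : Fin k → ℝ) :
    gaussianPi k m
      = (stdGaussianPi k).withDensity fun z => ∏ j, gaussianLikelihoodRatio (m j) (z j) := by
  rw [gaussianPi_eq_pi]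
  simp_rw [gaussianReal_eq_withDensity (m _)]
  exact Measure.pi_withDensity fun j => measurable_gaussianLikelihoodRatio (m j)

theorem lintegral_stdGaussianPi_likelihoodRatio_sq {k : ℕ} (m : Fin k → ℝ) :
    ∫⁻ z, (∏ j, gaussianLikelihoodRatio (m j) (z j)) ^ 2 ∂stdGaussianPi k
      = ENNReal.ofReal (exp (∑ j, m j ^ 2)) := by
  simp_rw [← Finset.prod_pow]
  rw [stdGaussianPi,
    lintegral_fintype_prod_eq_prod fun j => (measurable_gaussianLikelihoodRatio _).pow_const 2]
  simp_rw [lintegral_gaussianLikelihoodRatio_sq]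
  rw [← ENNReal.ofReal_prod_of_nonneg fun j _ => (exp_pos _).le, exp_sum]

theorem gaussianPi_real_le_exp_mul_sqrt {k : ℕ} (m : Fin k → ℝ) {A : Set (Fin k → ℝ)}
    (hA : MeasurableSet A) :
    (gaussianPi k m).real A ≤ exp ((∑ j, m j ^ 2) / 2) * √((stdGaussianPi k).real A) := by
  have h := withDensity_apply_le_sqrt_mul_sqrt (stdGaussianPi k)
    (f := fun z => ∏ j, gaussianLikelihoodRatio (m j) (z j))
    (Finset.measurable_prod _ fun j _ =>
      (measurable_gaussianLikelihoodRatio _).comp (measurable_pi_apply j)).aemeasurable hA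
  rw [← gaussianPi_eq_withDensity, lintegral_stdGaussianPi_likelihoodRatio_sq,
    ENNReal.ofReal_rpow_of_pos (exp_pos _), ← exp_mul] at h
  have := ENNReal.toReal_mono (by finiteness) h
  rwa [ENNReal.toReal_mul, ENNReal.toReal_ofReal (exp_pos _).le, ← ENNReal.toReal_rpow,
    ← sqrt_eq_rpow, ← measureReal_def, ← measureReal_def, mul_one_div] at this

theorem sum_sq_scaledBasis {k : ℕ} (c : ℝ) (i : Fin k) :
    ∑ j, scaledBasis k c i j ^ 2 = c ^ 2 := by
  simp [scaledBasis]

theorem sum_sq_scaledBasis_sub {k : ℕ} (c : ℝ) (a b : Fin k) :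
    ∑ j, (scaledBasis k c a j - scaledBasis k c b j) ^ 2 = if a = b then 0 else 2 * c ^ 2 := by
  split_ifs with hab
  · simp [hab]
  · simp only [sub_sq, Finset.sum_add_distrib, Finset.sum_sub_distrib, sum_sq_scaledBasis]
    simp [scaledBasis, Ne.symm hab]
    ring

theorem jointLaw_apply {k : ℕ} (c : ℝ) {S : Set (Fin k × (Fin k → ℝ))} (hS : MeasurableSet S) :
    jointLaw k c S = (k : ℝ≥0∞)⁻¹ * ∑ i, gaussianPi k (scaledBasis k c i) (Prod.mk i ⁻¹' S) := by
  rw [jointLaw, Measure.smul_apply, Measure.finsetSum_apply, smul_eq_mul]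
  congr 1
  exact Finset.sum_congr rfl fun i _ => by
    rw [Measure.dirac_prod, Measure.map_apply measurable_prodMk_left hS]

instance {k : ℕ} [NeZero k] (c : ℝ) : IsProbabilityMeasure (jointLaw k c) := by
  constructor
  simp only [jointLaw_apply c MeasurableSet.univ, Set.preimage_univ, measure_univ,
    Finset.sum_const, Finset.card_univ, Fintype.card_fin, nsmul_eq_mul, mul_one]
  exact ENNReal.inv_mul_cancel (NeZero.ne _) (ENNReal.natCast_ne_top k)

theorem jointLaw_real_success_le {k : ℕ} [NeZero k] (c : ℝ) {Ψ : (Fin k → ℝ) → Fin k}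
    (hΨ : Measurable Ψ) : (jointLaw k c).real {p | Ψ p.2 = p.1} ≤ exp (c ^ 2 / 2) / √k := by
  have hS : MeasurableSet {p : Fin k × (Fin k → ℝ) | Ψ p.2 = p.1} :=
    measurableSet_eq_fun (hΨ.comp measurable_snd) measurable_fst
  have hfiber : ∀ i : Fin k, Prod.mk i ⁻¹' {p | Ψ p.2 = p.1} = Ψ ⁻¹' {i} := fun _ => rfl
  set q : Fin k → ℝ := fun i => (stdGaussianPi k).real (Ψ ⁻¹' {i})
  have hq : ∑ i, q i = 1 := by
    rw [sum_measureReal_preimage_singleton _ fun i _ => hΨ (measurableSet_singleton i)]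
    simp
  have hk : (0 : ℝ) < k := by exact_mod_cast Nat.pos_of_neZero k
  calc (jointLaw k c).real {p | Ψ p.2 = p.1}
      = (k : ℝ)⁻¹ * ∑ i, (gaussianPi k (scaledBasis k c i)).real (Ψ ⁻¹' {i}) := by
        simp only [measureReal_def, jointLaw_apply c hS, hfiber, ENNReal.toReal_mul,
          ENNReal.toReal_inv, ENNReal.toReal_natCast]
        rw [ENNReal.toReal_sum fun i _ => measure_ne_top _ _]
    _ ≤ (k : ℝ)⁻¹ * ∑ i, exp (c ^ 2 / 2) * (√(q i) * √1) := by
        gcongr with i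
        simpa [sum_sq_scaledBasis] using
          gaussianPi_real_le_exp_mul_sqrt (scaledBasis k c i)
            (hΨ (measurableSet_singleton i))
    _ ≤ (k : ℝ)⁻¹ * (exp (c ^ 2 / 2) * (√(∑ i, q i) * √(∑ _i : Fin k, 1))) := by
        rw [← Finset.mul_sum]
        gcongr
        exact Real.sum_sqrt_mul_sqrt_le _ (fun _ => measureReal_nonneg) fun _ => zero_le_one
    _ = exp (c ^ 2 / 2) / √k := by
        rw [hq]
        field_simp
        simp

theorem integral_sum_sq_scaledBasis_sub {k : ℕ} [NeZero k] (c : ℝ) {Ψ : (Fin k → ℝ) → Fin k}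
    (hΨ : Measurable Ψ) :
    ∫ p, (∑ j, (scaledBasis k c (Ψ p.2) j - scaledBasis k c p.1 j) ^ 2) ∂jointLaw k c
      = 2 * c ^ 2 * (1 - (jointLaw k c).real {p | Ψ p.2 = p.1}) := by
  have hS : MeasurableSet {p : Fin k × (Fin k → ℝ) | Ψ p.2 = p.1} :=
    measurableSet_eq_fun (hΨ.comp measurable_snd) measurable_fst
  have hind : ∀ p : Fin k × (Fin k → ℝ),
      ∑ j, (scaledBasis k c (Ψ p.2) j - scaledBasis k c p.1 j) ^ 2
        = {p | Ψ p.2 = p.1}ᶜ.indicator (fun _ => 2 * c ^ 2) p := fun p => by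
    rw [sum_sq_scaledBasis_sub]
    by_cases hp : Ψ p.2 = p.1 <;> simp [hp]
  simp_rw [hind]
  rw [integral_indicator_const _ hS.compl, probReal_compl_eq_one_sub hS, smul_eq_mul, mul_comm]

theorem exp_log_div_six_div_sqrt_le {x : ℝ} (hx : 2 ≤ x) : exp (log x / 6) / √x ≤ 4 / 5 := by
  set s := exp (log x / 3) with hs
  have hs0 : 0 < s := exp_pos _
  have hs3 : s ^ 3 = x := by
    rw [hs, ← exp_nat_mul, Nat.cast_ofNat, mul_div_cancel₀ _ three_ne_zero,
      exp_log (by linarith)]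
  have hhalf : exp (log x / 6) = √s := by
    rw [hs, ← exp_half]
    ring_nf
  have hsqrt : √x = s * √s := by
    rw [← hs3, show s ^ 3 = s ^ 2 * s by ring, sqrt_mul (by positivity), sqrt_sq hs0.le]
  have hs54 : 5 / 4 ≤ s := by nlinarith [sq_nonneg (s - 5 / 4)]
  rw [hhalf, hsqrt, div_mul_cancel_right₀ (sqrt_pos.2 hs0).ne']
  rw [inv_le_comm₀ hs0 (by norm_num)]
  linarith

/-- Information-theoretic lower bound for mean estimation: with `λ = √(log k / 3)`,
every (measurable) estimator `Ψ` of the component index incurs expected squared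
mean-estimation error `E‖λ e_{Ψ(Z)} − λ e_J‖² ≥ c · log k` for an absolute `c > 0`. -/
theorem stmt_10 :
    ∃ c : ℝ, 0 < c ∧ ∀ k : ℕ, 2 ≤ k →
      ∀ Ψ : (Fin k → ℝ) → Fin k, Measurable Ψ →
        c * Real.log k ≤
          ∫ p, (∑ j, (scaledBasis k (Real.sqrt (Real.log k / 3)) (Ψ p.2) j
              - scaledBasis k (Real.sqrt (Real.log k / 3)) p.1 j) ^ 2)
            ∂(jointLaw k (Real.sqrt (Real.log k / 3))) := by
  refine ⟨2 / 15, by norm_num, fun k hk Ψ hΨ => ?_⟩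
  have : NeZero k := ⟨by omega⟩
  have hk : (2 : ℝ) ≤ k := by exact_mod_cast hk
  have hlog : 0 ≤ log k := log_nonneg (by linarith)
  set lam := √(log k / 3)
  have hlam : lam ^ 2 = log k / 3 := sq_sqrt (by positivity)
  have hsucc : (jointLaw k lam).real {p | Ψ p.2 = p.1} ≤ 4 / 5 := by
    refine (jointLaw_real_success_le lam hΨ).trans ?_
    rw [hlam, div_div, show (3 : ℝ) * 2 = 6 by norm_num]
    exact exp_log_div_six_div_sqrt_le hk
  rw [integral_sum_sq_scaledBasis_sub lam hΨ, hlam]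
  nlinarith
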